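/- arXiv:2204.13689 — 5 statements merged into one kernel-verified Lean document; each statement's English description precedes it below -/
import Mathlib

section
/- Inequality A, upper bound: Let a_1, a_2, … be positive integers and let k ≥ 2 satisfy gcd(a_1,…,a_k) = 1. Then for every natural number n, the denumerant satisfies D^a_k(n) ≤ (n + s^+_k)^{k−1} / ((k−1)! · a_1 a_2 ⋯ a_k), as an inequality of rational numbers. -/
/-- The denumerant: number of tuples `(x 1, …, x k)` of naturals with
`a 1 * x 1 + ⋯ + a k * x k = n`. -/
noncomputable def D (a : ℕ → ℕ) (k n : ℕ) : ℕ :=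
  {x : Fin k → ℕ | ∑ i, a (i.1 + 1) * x i = n}.ncard

/-- The cumulative denumerant: number of tuples with
`a 1 * x 1 + ⋯ + a k * x k ≤ n`. -/
noncomputable def Dhat (a : ℕ → ℕ) (k n : ℕ) : ℕ :=
  {x : Fin k → ℕ | ∑ i, a (i.1 + 1) * x i ≤ n}.ncard

/-- `gcdUpTo a i = gcd (a 1, …, a i)`. -/
def gcdUpTo (a : ℕ → ℕ) (i : ℕ) : ℕ := (Finset.Icc 1 i).gcd a

/-- The sequence `s⁺` of rationals. -/
def sPlus (a : ℕ → ℕ) : ℕ → ℚ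
  | 0 => 0
  | 1 => (a 1 * a 2 : ℚ) / (2 * gcdUpTo a 2)
  | i + 2 => sPlus a (i + 1) + ((gcdUpTo a (i + 1) : ℚ) / (2 * gcdUpTo a (i + 2))) * a (i + 2)

/-- The sequence `s⁻` of integers. -/
def sMinus (a : ℕ → ℕ) : ℕ → ℤ
  | 0 => 0
  | 1 => -(a 1 : ℤ)
  | i + 2 => sMinus a (i + 1) +
      (((gcdUpTo a (i + 1) / gcdUpTo a (i + 2) : ℕ) : ℤ) - 1) * (a (i + 2) : ℤ)

/-- Auxiliary recursion for the Blom–Fröberg number, with `m : ℕ`. -/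
def bfAux (a : ℕ → ℕ) (r : ℕ) : ℕ → ℤ → ℚ
  | 0, l => if l = 0 then 1 else 0
  | m + 1, l =>
      if l < 0 ∨ (m + 1 : ℤ) < l then 0
      else bfAux a r m l + (a (m + 1 + r) : ℚ) / 2 * bfAux a r m (l - 1)

/-- The Blom–Fröberg number `[m ℓ]^a_r`. -/
def bf (a : ℕ → ℕ) (r : ℕ) (m l : ℤ) : ℚ :=
  if m < 0 then 0 else bfAux a r m.toNat l


def sols (a : ℕ → ℕ) (k n : ℕ) : Finset (Fin k → ℕ) :=
  (Fintype.piFinset fun _ => Finset.range (n+1)).filter fun x => ∑ i, a (i.1 + 1) * x i = n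

lemma mem_sols (a : ℕ → ℕ) (ha : ∀ i, 1 ≤ a i) (k n : ℕ) (x : Fin k → ℕ) :
    x ∈ sols a k n ↔ ∑ i, a (i.1 + 1) * x i = n := by
  simp only [sols, Finset.mem_filter, Fintype.mem_piFinset, Finset.mem_range]
  constructor
  · exact fun h => h.2
  · intro h
    refine ⟨fun i => ?_, h⟩
    have h1 : a (i.1 + 1) * x i ≤ n := h ▸ Finset.single_le_sum (f := fun i => a (i.1+1) * x i)
      (fun _ _ => Nat.zero_le _) (Finset.mem_univ i)
    have := ha (i.1 + 1)
    have h2 : x i ≤ a (i.1+1) * x i := Nat.le_mul_of_pos_left _ this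
    omega

lemma D_eq_card (a : ℕ → ℕ) (ha : ∀ i, 1 ≤ a i) (k n : ℕ) :
    D a k n = (sols a k n).card := by
  rw [D, ← Set.ncard_coe_finset]
  congr 1
  ext x
  simp [mem_sols a ha]



lemma sols_one_card (a : ℕ → ℕ) (ha : ∀ i, 1 ≤ a i) (m : ℕ) :
    (sols a 1 m).card = if a 1 ∣ m then 1 else 0 := by
  split_ifs with hd
  · obtain ⟨c, rfl⟩ := hd
    rw [Finset.card_eq_one]
    refine ⟨fun _ => c, ?_⟩
    ext x
    rw [mem_sols a ha]
    simp only [Fin.sum_univ_one, Finset.mem_singleton]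
    constructor
    · intro h
      funext i
      have h0 : x 0 = c := by
        have : 0 < a 1 := ha 1
        have : a (0+1) * x 0 = a 1 * c := h
        simpa using Nat.eq_of_mul_eq_mul_left (ha 1) this
      have : i = 0 := Subsingleton.elim _ _
      rw [this, h0]
    · rintro rfl; simp
  · rw [Finset.card_eq_zero]
    ext x
    simp only [Finset.notMem_empty, iff_false]
    rw [mem_sols a ha]
    simp only [Fin.sum_univ_one]
    intro h
    exact hd ⟨x 0, by simpa using h.symm⟩

lemma sum_split (a : ℕ → ℕ) (k : ℕ) (x : Fin (k+1) → ℕ) :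
    ∑ i, a (i.1 + 1) * x i =
      (∑ i : Fin k, a (i.1 + 1) * (Fin.init x) i) + a (k+1) * x (Fin.last k) := by
  rw [Fin.sum_univ_castSucc]
  simp [Fin.init]

lemma sols_succ_card (a : ℕ → ℕ) (ha : ∀ i, 1 ≤ a i) (k n : ℕ) :
    (sols a (k+1) n).card =
      ∑ v ∈ Finset.range (n+1),
        if a (k+1) * v ≤ n then (sols a k (n - a (k+1) * v)).card else 0 := by
  rw [Finset.card_eq_sum_card_fiberwise (f := fun x => x (Fin.last k))
      (t := Finset.range (n+1)) ?_]
  · refine Finset.sum_congr rfl fun v _ => ?_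
    split_ifs with hv
    · refine Finset.card_bij' (fun x _ => Fin.init x) (fun y _ => Fin.snoc y v) ?_ ?_ ?_ ?_
      · intro x hx
        simp only [Finset.mem_filter] at hx
        obtain ⟨hx1, hx2⟩ := hx
        show Fin.init x ∈ sols a k (n - a (k+1) * v)
        rw [mem_sols a ha] at hx1 ⊢
        rw [sum_split] at hx1
        rw [hx2] at hx1
        omega
      · intro y hy
        rw [mem_sols a ha] at hy
        simp only [Finset.mem_filter]
        constructor
        · rw [mem_sols a ha, sum_split]
          simp only [Fin.snoc_last, Fin.init_snoc, hy]
          omega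
        · simp
      · intro x hx
        simp only [Finset.mem_filter] at hx
        obtain ⟨hx1, hx2⟩ := hx
        subst hx2
        exact Fin.snoc_init_self x
      · intro y hy
        simp
    · rw [Finset.card_eq_zero]
      ext x
      simp only [Finset.notMem_empty, iff_false, Finset.mem_filter]
      rintro ⟨hx1, hx2⟩
      rw [mem_sols a ha, sum_split, hx2] at hx1
      omega
  · intro x hx
    simp only [Finset.mem_coe] at hx ⊢
    rw [mem_sols a ha, sum_split] at hx
    have : 1 ≤ a (k+1) := ha _
    have hb : a (k+1) * x (Fin.last k) ≤ n := by omega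
    have : x (Fin.last k) ≤ a (k+1) * x (Fin.last k) := Nat.le_mul_of_pos_left _ (ha _)
    simp only [Finset.mem_range]
    omega



lemma gcd_div_const (s : Finset ℕ) (f : ℕ → ℕ) (d : ℕ) (hd0 : d ≠ 0)
    (h : ∀ i ∈ s, d ∣ f i) : s.gcd (fun i => f i / d) = s.gcd f / d := by
  have hdG : d ∣ s.gcd f := Finset.dvd_gcd h
  apply Nat.dvd_antisymm
  · have h1 : d * s.gcd (fun i => f i / d) ∣ s.gcd f := by
      apply Finset.dvd_gcd
      intro i hi
      have h2 : s.gcd (fun i => f i / d) ∣ f i / d := Finset.gcd_dvd hi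
      calc d * s.gcd (fun i => f i / d) ∣ d * (f i / d) := mul_dvd_mul_left d h2
        _ = f i := Nat.mul_div_cancel' (h i hi)
    rw [← Nat.div_mul_cancel hdG, mul_comm] at h1
    exact (mul_dvd_mul_iff_right (by exact_mod_cast hd0 : (d:ℕ) ≠ 0)).mp h1
  · apply Finset.dvd_gcd
    intro i hi
    obtain ⟨e, he⟩ := Finset.gcd_dvd hi (f := f)
    have hG : d * (s.gcd f / d) = s.gcd f := Nat.mul_div_cancel' hdG
    refine ⟨e, ?_⟩
    rw [he, ← hG, mul_assoc, Nat.mul_div_cancel_left _ (Nat.pos_of_ne_zero hd0),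
      Nat.mul_div_cancel_left _ (Nat.pos_of_ne_zero hd0)]

def scaleSeq (a : ℕ → ℕ) (d k : ℕ) : ℕ → ℕ := fun i => if 1 ≤ i ∧ i ≤ k then a i / d else 1

lemma scaleSeq_pos (a : ℕ → ℕ) (ha : ∀ i, 1 ≤ a i) (d k : ℕ)
    (hd : ∀ i ∈ Finset.Icc 1 k, d ∣ a i) : ∀ i, 1 ≤ scaleSeq a d k i := by
  intro i
  unfold scaleSeq
  split_ifs with h
  · have := hd i (Finset.mem_Icc.mpr ⟨h.1, h.2⟩)
    have h1 := ha i
    exact Nat.one_le_div_iff (Nat.pos_of_dvd_of_pos this (by omega)) |>.mpr (Nat.le_of_dvd (by omega) this)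
  · exact le_refl 1

lemma gcdUpTo_scale (a : ℕ → ℕ) (d k j : ℕ) (hjk : j ≤ k) (hd0 : d ≠ 0)
    (hd : ∀ i ∈ Finset.Icc 1 k, d ∣ a i) :
    gcdUpTo (scaleSeq a d k) j = gcdUpTo a j / d := by
  unfold gcdUpTo
  rw [show (Finset.Icc 1 j).gcd (scaleSeq a d k) = (Finset.Icc 1 j).gcd (fun i => a i / d) from
    Finset.gcd_congr rfl fun i hi => by
      simp only [Finset.mem_Icc] at hi
      simp [scaleSeq, hi.1, hi.2.trans hjk]]
  exact gcd_div_const _ _ _ hd0 fun i hi => hd i (by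
    simp only [Finset.mem_Icc] at hi ⊢; exact ⟨hi.1, hi.2.trans hjk⟩)

lemma sols_scale (a : ℕ → ℕ) (ha : ∀ i, 1 ≤ a i) (d k n : ℕ) (hd0 : d ≠ 0)
    (hd : ∀ i ∈ Finset.Icc 1 k, d ∣ a i) (hn : d ∣ n) :
    sols a k n = sols (scaleSeq a d k) k (n / d) := by
  ext x
  rw [mem_sols a ha, mem_sols _ (scaleSeq_pos a ha d k hd)]
  have key : ∀ i : Fin k, a (i.1 + 1) = d * scaleSeq a d k (i.1 + 1) := by
    intro i
    have hi : i.1 + 1 ∈ Finset.Icc 1 k := Finset.mem_Icc.mpr ⟨by omega, by omega⟩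
    simp only [scaleSeq, show 1 ≤ i.1 + 1 ∧ i.1 + 1 ≤ k by constructor <;> omega, if_pos,
      and_self, ite_true]
    exact (Nat.mul_div_cancel' (hd _ hi)).symm
  have hsum : ∑ i, a (i.1 + 1) * x i = d * ∑ i, scaleSeq a d k (i.1 + 1) * x i := by
    rw [Finset.mul_sum]
    exact Finset.sum_congr rfl fun i _ => by rw [key i, mul_assoc]
  rw [hsum]
  constructor
  · intro h
    rw [← h]
    exact (Nat.mul_div_cancel_left _ (Nat.pos_of_ne_zero hd0)).symm
  · intro h
    rw [h, Nat.mul_div_cancel' hn]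

lemma sols_empty_of_not_dvd (a : ℕ → ℕ) (ha : ∀ i, 1 ≤ a i) (d k n : ℕ)
    (hd : ∀ i ∈ Finset.Icc 1 k, d ∣ a i) (hn : ¬ d ∣ n) :
    sols a k n = ∅ := by
  ext x
  simp only [Finset.notMem_empty, iff_false]
  intro hx
  rw [mem_sols a ha] at hx
  apply hn
  rw [← hx]
  apply Finset.dvd_sum
  intro i _
  exact Dvd.dvd.mul_right (hd _ (Finset.mem_Icc.mpr ⟨by omega, by omega⟩)) _

lemma binom3 (j : ℕ) (t u : ℚ) (ht : 0 ≤ t) (hu : 0 ≤ u) :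
    2*t^(j+2) + 2*((j:ℚ)+2)*t^(j+1)*u + ((j:ℚ)+2)*((j:ℚ)+1)*t^j*u^2 ≤ 2*(t+u)^(j+2) := by
  induction j with
  | zero =>
    norm_num
    nlinarith [sq_nonneg (t+u)]
  | succ j ih =>
    have p1 : t ^ (j+1) = t^j * t := pow_succ t j
    have p2 : t ^ (j+2) = t^j * t^2 := by rw [pow_add]
    have p3 : t ^ (j+1+2) = t^j * t^3 := by rw [show j+1+2 = j+3 from rfl, pow_add]
    have p4 : t ^ (j+1+1) = t^j * t^2 := by rw [show j+1+1 = j+2 from rfl, pow_add]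
    have q : (t+u)^(j+1+2) = (t+u)^(j+2) * (t+u) := by
      rw [show j+1+2 = j+2+1 from rfl, pow_succ]
    rw [p1, p2] at ih
    rw [p3, p4, p1, q]
    have hmul := mul_le_mul_of_nonneg_left ih (add_nonneg ht hu)
    have htj : (0:ℚ) ≤ t^j := pow_nonneg ht j
    have hj : (0:ℚ) ≤ (j:ℚ) := Nat.cast_nonneg j
    have c1 : (0:ℚ) ≤ t^j * u^3 := by positivity
    have c2 : (0:ℚ) ≤ (j:ℚ) * (t^j * u^3) := by positivity
    have c3 : (0:ℚ) ≤ (j:ℚ)^2 * (t^j * u^3) := by positivity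
    push_cast
    nlinarith [hmul, c1, c2, c3]

lemma A1 (j : ℕ) (t u : ℚ) (ht : 0 ≤ t) (hu : 0 ≤ u) :
    2*((j:ℚ)+2)*u*t^(j+1) ≤ (t+u)^(j+2) := by
  have hb := binom3 j t u ht hu
  have p1 : t ^ (j+1) = t^j * t := pow_succ t j
  have p2 : t ^ (j+2) = t^j * t^2 := by rw [pow_add]
  rw [p1, p2] at hb
  rw [p1]
  have htj : (0:ℚ) ≤ t^j := pow_nonneg ht j
  have hj : (0:ℚ) ≤ (j:ℚ) := Nat.cast_nonneg j
  have h1 : ((j:ℚ)+2)*t*u ≤ t^2 + ((j:ℚ)+2)*((j:ℚ)+1)/2*u^2 := by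
    nlinarith [sq_nonneg (t - (((j:ℚ)+2)/2)*u), sq_nonneg u, sq_nonneg (((j:ℚ))*u)]
  have h2 := mul_le_mul_of_nonneg_left h1 htj
  nlinarith [hb, h2]

lemma even_pow_ge (k : ℕ) (t u : ℚ) (hu : 0 ≤ u) (hut : u ≤ t) :
    2*t^k ≤ (t+u)^k + (t-u)^k := by
  induction k with
  | zero => norm_num
  | succ k ih =>
    have hle : t - u ≤ t + u := by linarith
    have h0 : (0:ℚ) ≤ t - u := by linarith
    have hp := pow_le_pow_left₀ h0 hle k
    have e1 : (t+u)^(k+1) = (t+u)^k * (t+u) := pow_succ _ _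
    have e2 : (t-u)^(k+1) = (t-u)^k * (t-u) := pow_succ _ _
    have e3 : t^(k+1) = t^k * t := pow_succ _ _
    rw [e1, e2, e3]
    nlinarith [ih, hp, mul_le_mul_of_nonneg_left ih (by linarith : (0:ℚ) ≤ t)]

lemma A2 (j : ℕ) (t u : ℚ) (hu : 0 ≤ u) (hut : u ≤ t) :
    2*((j:ℚ)+1)*u*t^j ≤ (t+u)^(j+1) - (t-u)^(j+1) := by
  induction j with
  | zero => norm_num; nlinarith []
  | succ j ih =>
    have e1 : (t+u)^(j+2) = (t+u)^(j+1) * (t+u) := pow_succ _ _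
    have e2 : (t-u)^(j+2) = (t-u)^(j+1) * (t-u) := pow_succ _ _
    have e3 : t^(j+1) = t^j * t := pow_succ _ _
    have hev := even_pow_ge (j+1) t u hu hut
    have ht : (0:ℚ) ≤ t := le_trans hu hut
    push_cast
    rw [e1, e2, e3]
    nlinarith [mul_le_mul_of_nonneg_left ih ht, mul_le_mul_of_nonneg_left hev hu]

lemma key0 (h : ℚ) (hh : 0 < h) :
    ∀ (N : ℕ) (V : Finset ℕ), V.card = N → ∀ (t : ℕ → ℚ) (T : ℚ), 0 ≤ T →
    (∀ v ∈ V, 0 ≤ t v) → (∀ v ∈ V, t v ≤ T) →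
    (∀ v ∈ V, ∀ w ∈ V, v < w → t w + h ≤ t v) →
    (V.card : ℚ) ≤ (T + h)/h := by
  intro N
  induction N with
  | zero =>
    intro V hV t T hT _ _ _
    rw [hV]
    simp only [Nat.cast_zero]
    positivity
  | succ N ih =>
    intro V hV t T hT h0 hTle hsp
    have hne : V.Nonempty := Finset.card_pos.mp (by omega)
    set v₀ := V.min' hne with hv₀
    have hv₀V : v₀ ∈ V := V.min'_mem hne
    set V' := V.erase v₀ with hV'
    have hcard : V'.card = N := by
      rw [hV', Finset.card_erase_of_mem hv₀V, hV]
      omega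
    have hlt : ∀ w ∈ V', v₀ < w := by
      intro w hw
      have hwV : w ∈ V := Finset.mem_of_mem_erase hw
      have := V.min'_le w hwV
      have hne' : w ≠ v₀ := Finset.ne_of_mem_erase hw
      omega
    have hTle' : ∀ w ∈ V', t w ≤ t v₀ - h := by
      intro w hw
      have := hsp v₀ hv₀V w (Finset.mem_of_mem_erase hw) (hlt w hw)
      linarith
    have hcV : (V.card : ℚ) = 1 + (V'.card : ℚ) := by
      rw [hcard, hV]
      push_cast
      ring
    by_cases hne' : V'.Nonempty
    · obtain ⟨w, hw⟩ := hne'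
      have hT' : 0 ≤ t v₀ - h := le_trans (h0 w (Finset.mem_of_mem_erase hw)) (hTle' w hw)
      have := ih V' hcard t (t v₀ - h) hT'
        (fun v hv => h0 v (Finset.mem_of_mem_erase hv)) hTle'
        (fun v hv w' hw' hlt' => hsp v (Finset.mem_of_mem_erase hv) w'
          (Finset.mem_of_mem_erase hw') hlt')
      have hv0T : t v₀ ≤ T := hTle v₀ hv₀V
      rw [hcV]
      have h3 : (V'.card : ℚ) ≤ t v₀ / h := by
        rw [show t v₀ - h + h = t v₀ by ring] at this
        exact this
      have h4 : t v₀ / h ≤ T / h := (div_le_div_iff_of_pos_right hh).mpr hv0T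
      have h5 : (T+h)/h = T/h + 1 := by rw [add_div, div_self hh.ne']
      linarith
    · have : V' = ∅ := Finset.not_nonempty_iff_eq_empty.mp hne'
      rw [hcV, this]
      simp only [Finset.card_empty, Nat.cast_zero, add_zero]
      rw [le_div_iff₀ hh]
      have := hTle v₀ hv₀V
      have := h0 v₀ hv₀V
      linarith

lemma key (j : ℕ) (h : ℚ) (hh : 0 < h) :
    ∀ (N : ℕ) (V : Finset ℕ), V.card = N → ∀ (t : ℕ → ℚ) (T : ℚ), 0 ≤ T →
    (∀ v ∈ V, 0 ≤ t v) → (∀ v ∈ V, t v ≤ T) →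
    (∀ v ∈ V, ∀ w ∈ V, v < w → t w + h ≤ t v) →
    ∑ v ∈ V, (t v)^(j+1) ≤ (T + h/2)^(j+2) / (((j:ℚ)+2) * h) := by
  have hden : (0:ℚ) < ((j:ℚ)+2) * h := by positivity
  intro N
  induction N with
  | zero =>
    intro V hV t T hT _ _ _
    rw [Finset.card_eq_zero.mp hV]
    simp only [Finset.sum_empty]
    positivity
  | succ N ih =>
    intro V hV t T hT h0 hTle hsp
    have hne : V.Nonempty := Finset.card_pos.mp (by omega)
    set v₀ := V.min' hne with hv₀
    have hv₀V : v₀ ∈ V := V.min'_mem hne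
    set V' := V.erase v₀ with hV'
    have hcard : V'.card = N := by
      rw [hV', Finset.card_erase_of_mem hv₀V, hV]
      omega
    have hTle' : ∀ w ∈ V', t w ≤ t v₀ - h := by
      intro w hw
      have hwV : w ∈ V := Finset.mem_of_mem_erase hw
      have h1 := V.min'_le w hwV
      have h2 : w ≠ v₀ := Finset.ne_of_mem_erase hw
      have := hsp v₀ hv₀V w hwV (by omega)
      linarith
    have hsum : ∑ v ∈ V, (t v)^(j+1) = (t v₀)^(j+1) + ∑ v ∈ V', (t v)^(j+1) := by
      rw [hV']
      exact (Finset.add_sum_erase _ _ hv₀V).symm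
    have h0v := h0 v₀ hv₀V
    have hTv := hTle v₀ hv₀V
    have hTh : (0:ℚ) ≤ T + h/2 := by linarith
    have hmono : (t v₀ + h/2)^(j+2) ≤ (T + h/2)^(j+2) :=
      pow_le_pow_left₀ (by linarith) (by linarith) _
    rw [hsum, le_div_iff₀ hden]
    by_cases hne' : V'.Nonempty
    · obtain ⟨w, hw⟩ := hne'
      have hT' : 0 ≤ t v₀ - h := le_trans (h0 w (Finset.mem_of_mem_erase hw)) (hTle' w hw)
      have hIH := ih V' hcard t (t v₀ - h) hT'
        (fun v hv => h0 v (Finset.mem_of_mem_erase hv)) hTle'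
        (fun v hv w' hw' hlt' => hsp v (Finset.mem_of_mem_erase hv) w'
          (Finset.mem_of_mem_erase hw') hlt')
      rw [le_div_iff₀ hden] at hIH
      have hA2 := A2 (j+1) (t v₀) (h/2) (by linarith) (by linarith)
      push_cast at hA2
      have he : t v₀ - h + h/2 = t v₀ - h/2 := by ring
      rw [he] at hIH
      nlinarith [hIH, hA2, hmono]
    · have hVe : V' = ∅ := Finset.not_nonempty_iff_eq_empty.mp hne'
      rw [hVe]
      simp only [Finset.sum_empty, add_zero]
      have hA1 := A1 j (t v₀) (h/2) h0v (by linarith)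
      nlinarith [hA1, hmono]



lemma gcdUpTo_dvd (a : ℕ → ℕ) (k i : ℕ) (h1 : 1 ≤ i) (h2 : i ≤ k) : gcdUpTo a k ∣ a i :=
  Finset.gcd_dvd (Finset.mem_Icc.mpr ⟨h1, h2⟩)

lemma gcdUpTo_pos (a : ℕ → ℕ) (ha : ∀ i, 1 ≤ a i) (k : ℕ) (hk : 1 ≤ k) :
    0 < gcdUpTo a k := by
  rcases Nat.eq_zero_or_pos (gcdUpTo a k) with h | h
  · exfalso
    have := gcdUpTo_dvd a k 1 le_rfl hk
    rw [h] at this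
    have := Nat.eq_zero_of_zero_dvd this
    have := ha 1
    omega
  · exact h

lemma gcdUpTo_succ (a : ℕ → ℕ) (k : ℕ) :
    gcdUpTo a (k+1) = Nat.gcd (gcdUpTo a k) (a (k+1)) := by
  unfold gcdUpTo
  rw [show Finset.Icc 1 (k+1) = insert (k+1) (Finset.Icc 1 k) by
    rw [← Finset.insert_Icc_right_eq_Icc_add_one (by omega)]]
  rw [Finset.gcd_insert]
  exact Nat.gcd_comm _ _

lemma sPlus_succ (a : ℕ → ℕ) (k : ℕ) (hk : 1 ≤ k) :
    sPlus a (k+1) = sPlus a k +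
      ((gcdUpTo a k : ℚ) / (2 * gcdUpTo a (k+1))) * a (k+1) := by
  obtain ⟨m, rfl⟩ : ∃ m, k = m + 1 := ⟨k - 1, by omega⟩
  rfl

lemma sPlus_nonneg (a : ℕ → ℕ) (k : ℕ) : 0 ≤ sPlus a k := by
  induction k with
  | zero => exact le_refl 0
  | succ k ih =>
    rcases Nat.eq_zero_or_pos k with rfl | hk
    · show (0:ℚ) ≤ (a 1 * a 2 : ℚ) / (2 * gcdUpTo a 2)
      positivity
    · rw [sPlus_succ a k hk]
      have : (0:ℚ) ≤ ((gcdUpTo a k : ℚ) / (2 * gcdUpTo a (k+1))) * a (k+1) := by positivity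
      linarith

lemma dvd_gcdUpTo (a : ℕ → ℕ) (d k j : ℕ) (hjk : j ≤ k)
    (hd : ∀ i ∈ Finset.Icc 1 k, d ∣ a i) : d ∣ gcdUpTo a j :=
  Finset.dvd_gcd fun i hi => hd i (by
    simp only [Finset.mem_Icc] at hi ⊢; exact ⟨hi.1, hi.2.trans hjk⟩)

lemma cast_div_nat (x d : ℕ) (h : d ∣ x) (hd : d ≠ 0) : ((x / d : ℕ) : ℚ) = (x : ℚ) / d :=
  Nat.cast_div h (by exact_mod_cast hd)

lemma sPlus_scale (a : ℕ → ℕ) (ha : ∀ i, 1 ≤ a i) (d k : ℕ) (hd0 : d ≠ 0)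
    (hd : ∀ i ∈ Finset.Icc 1 k, d ∣ a i) (hk2 : 2 ≤ k) :
    ∀ j, 1 ≤ j → j ≤ k → sPlus (scaleSeq a d k) j = sPlus a j / d := by
  have hdQ : ((d:ℚ)) ≠ 0 := by exact_mod_cast hd0
  have hsc : ∀ i, 1 ≤ i → i ≤ k → ((scaleSeq a d k i : ℕ) : ℚ) = (a i : ℚ) / d := by
    intro i h1 h2
    simp only [scaleSeq, if_pos (⟨h1, h2⟩ : 1 ≤ i ∧ i ≤ k)]
    exact cast_div_nat _ _ (hd i (Finset.mem_Icc.mpr ⟨h1, h2⟩)) hd0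
  have hgc : ∀ j, 1 ≤ j → j ≤ k → ((gcdUpTo (scaleSeq a d k) j : ℕ) : ℚ) = (gcdUpTo a j : ℚ) / d := by
    intro j h1 h2
    rw [gcdUpTo_scale a d k j h2 hd0 hd]
    exact cast_div_nat _ _ (dvd_gcdUpTo a d k j h2 hd) hd0
  have hgpos : ∀ j, 1 ≤ j → (0:ℚ) < (gcdUpTo a j : ℚ) := by
    intro j h1
    exact_mod_cast gcdUpTo_pos a ha j h1
  intro j hj1
  induction j, hj1 using Nat.le_induction with
  | base =>
    intro h1k
    show ((scaleSeq a d k 1 : ℕ):ℚ) * (scaleSeq a d k 2 : ℕ) / (2 * (gcdUpTo (scaleSeq a d k) 2 : ℕ)) = _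
    rw [hsc 1 le_rfl (by omega), hsc 2 (by omega) hk2, hgc 2 (by omega) hk2]
    show _ = (a 1 * a 2 : ℚ) / (2 * gcdUpTo a 2) / d
    have hg2 := hgpos 2 (by omega)
    field_simp
  | succ j hj ihj =>
    intro hjk
    rw [sPlus_succ _ j hj, sPlus_succ a j hj, ihj (by omega),
      hgc j hj (by omega), hgc (j+1) (by omega) hjk, hsc (j+1) (by omega) hjk]
    have hgj := hgpos (j+1) (by omega)
    field_simp





lemma spacing_facts (c d n v w : ℕ) (hc : 1 ≤ c) (hcop : Nat.Coprime d c)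
    (hvw : v < w) (h1 : c*v ≤ n) (h2 : c*w ≤ n)
    (hd1 : d ∣ n - c*v) (hd2 : d ∣ n - c*w) : d ≤ w - v := by
  have hsub : d ∣ (n - c*v) - (n - c*w) := Nat.dvd_sub hd1 hd2
  have he : (n - c*v) - (n - c*w) = c*w - c*v := by omega
  have he2 : c*w - c*v = (w - v)*c := by
    rw [Nat.sub_mul, Nat.mul_comm w c, Nat.mul_comm v c]
  rw [he, he2] at hsub
  have hdvd : d ∣ w - v := hcop.dvd_of_dvd_mul_right hsub
  exact Nat.le_of_dvd (by omega) hdvd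

theorem main_bound : ∀ k, 2 ≤ k → ∀ a : ℕ → ℕ, (∀ i, 1 ≤ a i) → gcdUpTo a k = 1 → ∀ n : ℕ,
    ((sols a k n).card : ℚ) ≤ ((n : ℚ) + sPlus a k) ^ (k - 1) /
      ((Nat.factorial (k - 1) : ℚ) * ∏ i ∈ Finset.Icc 1 k, (a i : ℚ)) := by
  intro k hk
  induction k, hk using Nat.le_induction with
  | base =>
    intro a ha hg n
    have hg1 : gcdUpTo a 1 = a 1 := by
      unfold gcdUpTo
      rw [Finset.Icc_self, Finset.gcd_singleton]
      simp
    have hcop : Nat.Coprime (a 1) (a 2) := by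
      have h2 := gcdUpTo_succ a 1
      rw [hg, hg1] at h2
      exact h2.symm
    have ha1 := ha 1
    have ha2 := ha 2
    -- card = |V|
    set V := (Finset.range (n+1)).filter (fun v => a 2 * v ≤ n ∧ a 1 ∣ (n - a 2 * v)) with hVV
    have hcard : ((sols a 2 n).card : ℚ) = (V.card : ℚ) := by
      rw [sols_succ_card a ha 1 n]
      push_cast
      calc (∑ x ∈ Finset.range (n+1), if a 2 * x ≤ n then ((sols a 1 (n - a 2 * x)).card:ℚ) else 0)
          = ∑ x ∈ Finset.range (n+1), (if a 2 * x ≤ n ∧ a 1 ∣ (n - a 2 * x) then (1:ℚ) else 0) := by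
            refine Finset.sum_congr rfl fun v _ => ?_
            rw [sols_one_card a ha]
            split_ifs <;> simp_all
        _ = (V.card : ℚ) := by
            rw [Finset.sum_boole, hVV]
    rw [hcard]
    -- key0
    have hh : (0:ℚ) < (a 1 : ℚ) * (a 2 : ℚ) := by positivity
    have hb := key0 ((a 1:ℚ)*(a 2:ℚ)) hh V.card V rfl
      (fun v => (n:ℚ) - (a 2:ℚ)*v) n (by positivity)
      (fun v hv => by
        show (0:ℚ) ≤ (n:ℚ) - (a 2:ℚ)*v
        simp only [hVV, Finset.mem_filter] at hv
        have : ((a 2 * v : ℕ):ℚ) ≤ (n:ℚ) := by exact_mod_cast hv.2.1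
        push_cast at this
        linarith)
      (fun v hv => by
        show (n:ℚ) - (a 2:ℚ)*v ≤ (n:ℚ)
        have : (0:ℚ) ≤ (a 2:ℚ)*v := by positivity
        linarith)
      (fun v hv w hw hvw => by
        show (n:ℚ) - (a 2:ℚ)*w + (a 1:ℚ)*(a 2:ℚ) ≤ (n:ℚ) - (a 2:ℚ)*v
        simp only [hVV, Finset.mem_filter] at hv hw
        have hsep := spacing_facts (a 2) (a 1) n v w ha2 hcop hvw hv.2.1 hw.2.1 hv.2.2 hw.2.2
        have hc1 : (a 1 : ℚ) ≤ (w:ℚ) - v := by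
          have : ((a 1 : ℕ):ℚ) ≤ ((w - v : ℕ):ℚ) := by exact_mod_cast hsep
          rw [Nat.cast_sub (le_of_lt hvw)] at this
          exact this
        have : (a 1:ℚ)*(a 2:ℚ) ≤ (a 2:ℚ)*((w:ℚ) - v) := by
          have h2 : (0:ℚ) ≤ (a 2:ℚ) := by positivity
          nlinarith
        linarith)
    -- now convert to target
    refine le_trans hb (le_of_eq ?_)
    have hsP : sPlus a 2 = (a 1:ℚ)*(a 2:ℚ) := by
      have h2 : sPlus a 2 = sPlus a 1 + ((gcdUpTo a 1 : ℚ) / (2 * gcdUpTo a 2)) * a 2 := rfl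
      have h1 : sPlus a 1 = (a 1 * a 2 : ℚ) / (2 * gcdUpTo a 2) := rfl
      rw [h2, h1, hg, hg1]
      push_cast
      ring
    have hprod : ∏ i ∈ Finset.Icc 1 2, (a i : ℚ) = (a 1:ℚ)*(a 2:ℚ) := by
      rw [show Finset.Icc 1 2 = {1, 2} from rfl]
      rw [Finset.prod_insert (by decide), Finset.prod_singleton]
    rw [hsP, hprod]
    norm_num [Nat.factorial]
  | succ k hk2 ih =>
    intro a ha hg n
    obtain ⟨j, rfl⟩ : ∃ j, k = j + 2 := ⟨k - 2, by omega⟩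
    set k' := j + 2 with hk'
    have hd_pos : 0 < gcdUpTo a k' := gcdUpTo_pos a ha k' (by omega)
    set d := gcdUpTo a k' with hdd
    set c := a (k'+1) with hcc
    have hc1 : 1 ≤ c := ha _
    have hcop : Nat.Coprime d c := by
      have := gcdUpTo_succ a k'
      rw [hg] at this
      exact this.symm
    have hddvd : ∀ i ∈ Finset.Icc 1 k', d ∣ a i := fun i hi => Finset.gcd_dvd hi
    have hd0 : d ≠ 0 := by omega
    have hdQ : ((d:ℚ)) ≠ 0 := by exact_mod_cast hd0
    set a' := scaleSeq a d k' with ha'd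
    have ha' : ∀ i, 1 ≤ a' i := scaleSeq_pos a ha d k' hddvd
    have hg' : gcdUpTo a' k' = 1 := by
      rw [ha'd, gcdUpTo_scale a d k' k' le_rfl hd0 hddvd, ← hdd, Nat.div_self hd_pos]
    have hIH := ih a' ha' hg'
    have hsPs : sPlus a' k' = sPlus a k' / d :=
      sPlus_scale a ha d k' hd0 hddvd (by omega) k' (by omega) le_rfl
    set s := sPlus a k' with hss
    have hs0 : 0 ≤ s := sPlus_nonneg a k'
    set A := ∏ i ∈ Finset.Icc 1 k', (a i : ℚ) with hAA
    have hA0 : 0 < A := Finset.prod_pos (fun i _ => by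
      have := ha i; exact_mod_cast this)
    set F := (Nat.factorial (k'-1) : ℚ) with hFF
    have hF0 : 0 < F := by
      rw [hFF]; exact_mod_cast Nat.factorial_pos _
    have hcQ : (0:ℚ) < (c:ℚ) := by exact_mod_cast hc1
    have hdQ' : (0:ℚ) < (d:ℚ) := by exact_mod_cast hd_pos
    have hprod' : ∏ i ∈ Finset.Icc 1 k', (a' i : ℚ) = A / (d:ℚ)^k' := by
      rw [hAA, show ∏ i ∈ Finset.Icc 1 k', (a' i : ℚ) = ∏ i ∈ Finset.Icc 1 k', ((a i:ℚ) / d) from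
        Finset.prod_congr rfl fun i hi => by
          simp only [Finset.mem_Icc] at hi
          rw [ha'd]
          show ((scaleSeq a d k' i : ℕ):ℚ) = _
          simp only [scaleSeq, if_pos (⟨hi.1, hi.2⟩ : 1 ≤ i ∧ i ≤ k')]
          exact cast_div_nat _ _ (hddvd i (Finset.mem_Icc.mpr hi)) hd0]
      rw [Finset.prod_div_distrib, Finset.prod_const, Nat.card_Icc]
      norm_num
    set V := (Finset.range (n+1)).filter (fun v => c*v ≤ n ∧ d ∣ (n - c*v)) with hVV
    -- step 1 : bound by sum over V
    have hstep : ((sols a (k'+1) n).card : ℚ) ≤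
        ∑ v ∈ V, (((n:ℚ) - (c:ℚ)*v + s)^(k'-1) * ((d:ℚ) / (F * A))) := by
      rw [sols_succ_card a ha k' n]
      push_cast
      rw [hVV, Finset.sum_filter]
      apply Finset.sum_le_sum
      intro v hv
      by_cases h1 : c*v ≤ n
      · by_cases h2 : d ∣ (n - c*v)
        · rw [if_pos h1, if_pos ⟨h1, h2⟩]
          rw [sols_scale a ha d k' (n - c*v) hd0 hddvd h2]
          refine le_trans (hIH ((n - c*v)/d)) ?_
          rw [hsPs, hprod']
          have hcast : (((n - c*v)/d : ℕ) : ℚ) = ((n:ℚ) - (c:ℚ)*v)/d := by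
            rw [cast_div_nat _ _ h2 hd0, Nat.cast_sub h1]
            push_cast
            ring
          rw [hcast]
          apply le_of_eq
          have e1 : ((n:ℚ) - (c:ℚ)*v)/d + s/d = ((n:ℚ) - (c:ℚ)*v + s)/d := by ring
          rw [e1, div_pow]
          have hpow : ((d:ℚ))^k' = (d:ℚ)^(k'-1) * d := by
            conv_lhs => rw [show k' = k' - 1 + 1 from by omega]
            rw [pow_succ]
          have hdp : ((d:ℚ))^(k'-1) ≠ 0 := by positivity
          rw [hpow]
          field_simp
        · rw [if_pos h1, if_neg (by tauto)]
          rw [sols_empty_of_not_dvd a ha d k' (n - c*v) hddvd h2]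
          simp
      · rw [if_neg h1, if_neg (by tauto)]
    -- step 2 : key bound
    have hh : (0:ℚ) < (c:ℚ)*(d:ℚ) := by positivity
    have hkey := key j ((c:ℚ)*(d:ℚ)) hh V.card V rfl
      (fun v => (n:ℚ) - (c:ℚ)*v + s) ((n:ℚ) + s) (by positivity)
      (fun v hv => by
        show (0:ℚ) ≤ (n:ℚ) - (c:ℚ)*v + s
        simp only [hVV, Finset.mem_filter] at hv
        have : ((c * v : ℕ):ℚ) ≤ (n:ℚ) := by exact_mod_cast hv.2.1
        push_cast at this
        linarith)
      (fun v hv => by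
        show (n:ℚ) - (c:ℚ)*v + s ≤ (n:ℚ) + s
        have : (0:ℚ) ≤ (c:ℚ)*v := by positivity
        linarith)
      (fun v hv w hw hvw => by
        show (n:ℚ) - (c:ℚ)*w + s + (c:ℚ)*(d:ℚ) ≤ (n:ℚ) - (c:ℚ)*v + s
        simp only [hVV, Finset.mem_filter] at hv hw
        have hsep := spacing_facts c d n v w hc1 hcop hvw hv.2.1 hw.2.1 hv.2.2 hw.2.2
        have hc2 : (d : ℚ) ≤ (w:ℚ) - v := by
          have : ((d : ℕ):ℚ) ≤ ((w - v : ℕ):ℚ) := by exact_mod_cast hsep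
          rw [Nat.cast_sub (le_of_lt hvw)] at this
          exact this
        have : (c:ℚ)*(d:ℚ) ≤ (c:ℚ)*((w:ℚ) - v) := by nlinarith
        linarith)
    -- massage exponents in hkey : j+1 = k'-1, j+2 = k'
    have hexp1 : j + 1 = k' - 1 := by omega
    have hexp2 : j + 2 = k' := by omega
    rw [hexp1] at hkey
    rw [show ((n:ℚ) + s + (c:ℚ)*(d:ℚ)/2)^(j+2) = ((n:ℚ) + s + (c:ℚ)*(d:ℚ)/2)^k' from by rw [hexp2]] at hkey
    have hcast2 : ((j:ℚ)+2) = ((k':ℚ)) := by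
      rw [hk']
      push_cast
      ring
    rw [hcast2] at hkey
    -- combine
    have hfactor : ∑ v ∈ V, (((n:ℚ) - (c:ℚ)*v + s)^(k'-1) * ((d:ℚ) / (F * A)))
        = (∑ v ∈ V, ((n:ℚ) - (c:ℚ)*v + s)^(k'-1)) * ((d:ℚ) / (F * A)) := by
      rw [Finset.sum_mul]
    have hmono : (∑ v ∈ V, ((n:ℚ) - (c:ℚ)*v + s)^(k'-1)) * ((d:ℚ) / (F * A))
        ≤ (((n:ℚ) + s + (c:ℚ)*(d:ℚ)/2)^k' / ((k':ℚ) * ((c:ℚ)*(d:ℚ)))) * ((d:ℚ) / (F * A)) := by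
      apply mul_le_mul_of_nonneg_right hkey
      positivity
    refine le_trans hstep (le_trans (le_of_eq hfactor) (le_trans hmono (le_of_eq ?_)))
    -- final algebraic identity
    have hsP1 : sPlus a (k'+1) = s + ((d:ℚ)/2) * c := by
      rw [sPlus_succ a k' (by omega), hg]
      push_cast
      rw [← hss, ← hdd, ← hcc]
      ring
    have hfac : (Nat.factorial ((k'+1)-1) : ℚ) = (k':ℚ) * F := by
      rw [show (k'+1)-1 = k' from rfl, hFF]
      rw [show Nat.factorial k' = k' * Nat.factorial (k'-1) from by
        conv_lhs => rw [show k' = (k'-1)+1 from by omega]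
        rw [Nat.factorial_succ]
        congr 1 <;> omega]
      push_cast
      ring
    have hprod2 : ∏ i ∈ Finset.Icc 1 (k'+1), (a i : ℚ) = A * c := by
      rw [Finset.prod_Icc_succ_top (by omega), ← hAA, ← hcc]
    rw [hfac, hprod2]
    rw [show ((n:ℚ)) + sPlus a (k'+1) = (n:ℚ) + s + (c:ℚ)*(d:ℚ)/2 from by rw [hsP1]; ring]
    rw [show ((k'+1)-1) = k' from rfl]
    field_simp

/-- Inequality A, upper bound. -/
theorem inequality_A_upper (a : ℕ → ℕ) (ha : ∀ i, 1 ≤ a i) (k : ℕ) (hk : 2 ≤ k)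
    (hgcd : gcdUpTo a k = 1) (n : ℕ) :
    (D a k n : ℚ) ≤ ((n : ℚ) + sPlus a k) ^ (k - 1) /
      ((Nat.factorial (k - 1) : ℚ) * ∏ i ∈ Finset.Icc 1 k, (a i : ℚ)) := by
  rw [show (D a k n : ℚ) = ((sols a k n).card : ℚ) from by rw [D_eq_card a ha]]
  exact main_bound k hk a ha hgcd n
end

section
/- Popoviciu's theorem: Let a_1, a_2 be positive integers with gcd(a_1, a_2) = 1, and let b_1, b_2 be natural numbers with b_1 a_1 ≡ 1 (mod a_2) and b_2 a_2 ≡ 1 (mod a_1). Then for every natural number n, D^a_2(n) = n/(a_1 a_2) − frac(b_2 n / a_1) − frac(b_1 n / a_2) + 1, as an identity of rational numbers, where frac denotes the fractional part. -/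
lemma fract_nat_div (k q : ℕ) (hq : 0 < q) :
    Int.fract ((k : ℚ) / q) = ((k % q : ℕ) : ℚ) / q := by
  conv_lhs => rw [← Nat.div_add_mod k q]
  have hq' : (q : ℚ) ≠ 0 := by positivity
  rw [Nat.cast_add, Nat.cast_mul, add_div, mul_div_cancel_left₀ _ hq']
  rw [show ((k / q : ℕ) : ℚ) = ((k / q : ℕ) : ℤ) by norm_cast, Int.fract_intCast_add]
  rw [Int.fract_eq_self]
  constructor
  · positivity
  · rw [div_lt_one (by positivity)]
    exact_mod_cast Nat.mod_lt k hq

set_option maxHeartbeats 1000000 in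
/-- Popoviciu's theorem. -/
theorem popoviciu (a : ℕ → ℕ) (ha : ∀ i, 1 ≤ a i) (hgcd : Nat.gcd (a 1) (a 2) = 1)
    (b1 b2 : ℕ) (hb1 : b1 * a 1 ≡ 1 [MOD a 2]) (hb2 : b2 * a 2 ≡ 1 [MOD a 1]) (n : ℕ) :
    (D a 2 n : ℚ) = (n : ℚ) / (a 1 * a 2) - Int.fract ((b2 * n : ℚ) / a 1)
      - Int.fract ((b1 * n : ℚ) / a 2) + 1 := by
  classical
  have hp : 0 < a 1 := ha 1
  have hq : 0 < a 2 := ha 2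
  set p := a 1 with hpdef
  set q := a 2 with hqdef
  set x0 := (b1 * n) % q with hx0def
  set y0 := (b2 * n) % p with hy0def
  have hx0q : x0 < q := Nat.mod_lt _ hq
  have hy0p : y0 < p := Nat.mod_lt _ hp
  -- n ≡ p * x0 [MOD q]
  have hmodq : n ≡ p * x0 [MOD q] := by
    calc n = 1 * n := (one_mul n).symm
    _ ≡ (b1 * p) * n [MOD q] := (hb1.symm.mul_right n)
    _ = p * (b1 * n) := by ring
    _ ≡ p * x0 [MOD q] := ((Nat.mod_modEq (b1 * n) q).symm.mul_left p)
  have hmodp : n ≡ q * y0 [MOD p] := by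
    calc n = 1 * n := (one_mul n).symm
    _ ≡ (b2 * q) * n [MOD p] := (hb2.symm.mul_right n)
    _ = q * (b2 * n) := by ring
    _ ≡ q * y0 [MOD p] := ((Nat.mod_modEq (b2 * n) p).symm.mul_left q)
  have hdq : (q : ℤ) ∣ (n : ℤ) - p * x0 - q * y0 := by
    obtain ⟨c, hc⟩ := hmodq.dvd
    push_cast at hc
    exact ⟨-c - y0, by push_cast; linarith⟩
  have hdp : (p : ℤ) ∣ (n : ℤ) - p * x0 - q * y0 := by
    obtain ⟨c, hc⟩ := hmodp.dvd
    push_cast at hc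
    exact ⟨-c - x0, by push_cast; linarith⟩
  have hcop : IsCoprime (p : ℤ) (q : ℤ) := by
    rw [Int.isCoprime_iff_gcd_eq_one, Int.gcd_natCast_natCast]
    exact hgcd
  obtain ⟨t, ht⟩ : ∃ t : ℤ, (n : ℤ) = p * x0 + q * y0 + p * q * t := by
    obtain ⟨t, htt⟩ := hcop.mul_dvd hdp hdq
    exact ⟨t, by linarith⟩
  have hpz : (0 : ℤ) < p := by exact_mod_cast hp
  have hqz : (0 : ℤ) < q := by exact_mod_cast hq
  have hx0z : (x0 : ℤ) < q := by exact_mod_cast hx0q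
  have hy0z : (y0 : ℤ) < p := by exact_mod_cast hy0p
  have hnz : (0 : ℤ) ≤ (n : ℤ) := Int.natCast_nonneg n
  have hx0nn : (0 : ℤ) ≤ (x0 : ℤ) := Int.natCast_nonneg x0
  have hy0nn : (0 : ℤ) ≤ (y0 : ℤ) := Int.natCast_nonneg y0
  have ht1 : -1 ≤ t := by
    by_contra h
    push_neg at h
    have h2 : t ≤ -2 := by omega
    nlinarith [mul_le_mul_of_nonneg_left h2 (le_of_lt (mul_pos hpz hqz))]
  set m := (t + 1).toNat with hmdef
  have hm : (m : ℤ) = t + 1 := Int.toNat_of_nonneg (by linarith)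
  -- explicit description of the solution set
  have hset : {x : Fin 2 → ℕ | ∑ i, a (i.1 + 1) * x i = n}
      = (fun j : ℕ => ![x0 + j * q, y0 + (m - 1 - j) * p]) '' (Set.Iio m) := by
    ext x
    simp only [Set.mem_setOf_eq, Fin.sum_univ_two, Set.mem_image, Set.mem_Iio]
    constructor
    · rintro hx
      -- x 0 and x 1 satisfy p * x 0 + q * x 1 = n
      have hx' : (p : ℤ) * x 0 + q * x 1 = n := by exact_mod_cast hx
      have hdvd : (q : ℤ) ∣ (x 0 : ℤ) - x0 := by
        apply hcop.symm.dvd_of_dvd_mul_left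
        exact ⟨(y0 : ℤ) + p * t - x 1, by linarith⟩
      obtain ⟨j', hj'⟩ := hdvd
      have hu : (x 0 : ℤ) = x0 + q * j' := by linarith
      have hj'nn : 0 ≤ j' := by
        by_contra h
        push_neg at h
        have : j' ≤ -1 := by omega
        nlinarith [Int.natCast_nonneg (x 0)]
      have hv : (x 1 : ℤ) = y0 + p * (t - j') := by
        have h2 : (q : ℤ) * (x 1) = q * ((y0 : ℤ) + p * (t - j')) := by
          linear_combination hx' + ht - (p : ℤ) * hu
        exact mul_left_cancel₀ (ne_of_gt hqz) h2
      have hjt : j' ≤ t := by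
        by_contra h
        push_neg at h
        have : t - j' ≤ -1 := by omega
        nlinarith [Int.natCast_nonneg (x 1)]
      refine ⟨j'.toNat, ?_, ?_⟩
      · omega
      · funext i
        fin_cases i
        · show x0 + j'.toNat * q = x 0
          have : ((x0 + j'.toNat * q : ℕ) : ℤ) = (x 0 : ℤ) := by
            push_cast [Int.toNat_of_nonneg hj'nn]
            linarith
          exact_mod_cast this
        · show y0 + (m - 1 - j'.toNat) * p = x 1
          have hle : j'.toNat + 1 ≤ m := by omega
          have : ((y0 + (m - 1 - j'.toNat) * p : ℕ) : ℤ) = (x 1 : ℤ) := by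
            rw [show m - 1 - j'.toNat = m - (j'.toNat + 1) by omega]
            push_cast [hle]
            have hj'' : (j'.toNat : ℤ) = j' := Int.toNat_of_nonneg hj'nn
            linear_combination -hv + (p : ℤ) * hm - (p : ℤ) * hj''
          exact_mod_cast this
    · rintro ⟨j, hj, rfl⟩
      simp only [Matrix.cons_val_zero, Matrix.cons_val_one, Matrix.head_cons]
      have hle : j + 1 ≤ m := hj
      have : ((p * (x0 + j * q) + q * (y0 + (m - 1 - j) * p) : ℕ) : ℤ) = (n : ℤ) := by
        rw [show m - 1 - j = m - (j + 1) by omega]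
        push_cast [hle]
        rw [ht]
        linear_combination (p : ℤ) * q * hm
      exact_mod_cast this
  have hDm : D a 2 n = m := by
    rw [D, hset, Set.ncard_image_of_injOn, ← Finset.coe_range, Set.ncard_coe_finset,
      Finset.card_range]
    intro j1 _ j2 _ hf
    have h0 := congrFun hf 0
    simp only [Matrix.cons_val_zero] at h0
    have : j1 * q = j2 * q := by omega
    exact Nat.eq_of_mul_eq_mul_right hq this
  -- now the rational computation
  rw [hDm]
  rw [show ((b2 : ℚ) * n) = ((b2 * n : ℕ) : ℚ) by push_cast; ring,
    show ((b1 : ℚ) * n) = ((b1 * n : ℕ) : ℚ) by push_cast; ring,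
    fract_nat_div _ _ hp, fract_nat_div _ _ hq]
  have hnQ : (n : ℚ) = p * x0 + q * y0 + p * q * t := by exact_mod_cast ht
  have hmQ : (m : ℚ) = t + 1 := by exact_mod_cast hm
  have hpQ : (p : ℚ) ≠ 0 := by positivity
  have hqQ : (q : ℚ) ≠ 0 := by positivity
  rw [hmQ, hnQ]
  rw [← hx0def, ← hy0def]
  field_simp
  ring
end

section
/- Power-sum lower bound: For every integer k ≥ 2, every real c with 0 ≤ c ≤ 1/2, and every real x ≥ −c, one has (x+c)^{k+1}/(k+1) + (x+c)^k/2 ≤ ∑_{ℓ=0}^{N} (x − ℓ + c)^k, where N = ⌊x⌋ if x ≥ 0 and N = 0 if x < 0 (i.e. N is the truncation Int.toNat ⌊x⌋). -/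
lemma key_pair (a b : ℝ) (ha : 0 ≤ a) (hab : a ≤ b) (i j : ℕ) :
    b ^ i * a ^ j + a ^ i * b ^ j ≤ a ^ (i + j) + b ^ (i + j) := by
  have h1 : a ^ i ≤ b ^ i := pow_le_pow_left₀ ha hab i
  have h2 : a ^ j ≤ b ^ j := pow_le_pow_left₀ ha hab j
  rw [pow_add, pow_add]
  nlinarith [mul_nonneg (sub_nonneg.2 h1) (sub_nonneg.2 h2)]

lemma sum_le (k : ℕ) (a b : ℝ) (ha : 0 ≤ a) (hab : a ≤ b) :
    2 * ∑ i ∈ Finset.range (k + 1), b ^ i * a ^ (k - i) ≤ (k + 1) * (a ^ k + b ^ k) := by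
  have hrefl : ∑ i ∈ Finset.range (k + 1), b ^ i * a ^ (k - i)
      = ∑ i ∈ Finset.range (k + 1), b ^ (k - i) * a ^ (k - (k - i)) := by
    exact (Finset.sum_range_reflect (fun i => b ^ i * a ^ (k - i)) (k + 1)).symm
  have : 2 * ∑ i ∈ Finset.range (k + 1), b ^ i * a ^ (k - i)
      = ∑ i ∈ Finset.range (k + 1), (b ^ i * a ^ (k - i) + b ^ (k - i) * a ^ i) := by
    rw [two_mul, Finset.sum_add_distrib]
    congr 1
    rw [hrefl]
    apply Finset.sum_congr rfl
    intro i hi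
    have hik : i ≤ k := by
      have := Finset.mem_range.mp hi; omega
    have h2 : k - (k - i) = i := by omega
    rw [h2]
  rw [this]
  calc ∑ i ∈ Finset.range (k + 1), (b ^ i * a ^ (k - i) + b ^ (k - i) * a ^ i)
      ≤ ∑ _i ∈ Finset.range (k + 1), (a ^ k + b ^ k) := by
        apply Finset.sum_le_sum
        intro i hi
        have hik : i ≤ k := by have := Finset.mem_range.mp hi; omega
        have := key_pair a b ha hab i (k - i)
        have h2 := key_pair a b ha hab (k - i) i
        have hk1 : i + (k - i) = k := by omega
        have hk2 : (k - i) + i = k := by omega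
        rw [hk1] at this; rw [hk2] at h2
        linarith
    _ = (k + 1) * (a ^ k + b ^ k) := by
        rw [Finset.sum_const, Finset.card_range]; push_cast; ring

lemma step_lemma (k : ℕ) (y : ℝ) (hy : 1 ≤ y) :
    y ^ (k + 1) / (k + 1) + y ^ k / 2 ≤
      y ^ k + ((y - 1) ^ (k + 1) / (k + 1) + (y - 1) ^ k / 2) := by
  have ha : (0:ℝ) ≤ y - 1 := by linarith
  have hab : y - 1 ≤ y := by linarith
  have hgeom := geom_sum₂_mul y (y - 1) (k + 1)
  simp only [add_tsub_cancel_right, sub_sub_cancel, mul_one] at hgeom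
  have hsum := sum_le k (y - 1) y ha hab
  have hexp : y ^ (k + 1) - (y - 1) ^ (k + 1)
      = ∑ i ∈ Finset.range (k + 1), y ^ i * (y - 1) ^ (k - i) := hgeom.symm
  have hk1 : (0:ℝ) < (k:ℝ) + 1 := by positivity
  have key : 2 * (y ^ (k + 1) - (y - 1) ^ (k + 1)) ≤ ((k:ℝ) + 1) * ((y - 1) ^ k + y ^ k) := by
    rw [hexp]; linarith [hsum]
  have hfinal : (y ^ (k + 1) - (y - 1) ^ (k + 1)) / ((k:ℝ) + 1) ≤ (y ^ k + (y - 1) ^ k) / 2 := by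
    rw [div_le_div_iff₀ hk1 two_pos]; linarith
  have e1 : (y ^ (k + 1) - (y - 1) ^ (k + 1)) / ((k:ℝ) + 1)
      = y ^ (k + 1) / ((k:ℝ) + 1) - (y - 1) ^ (k + 1) / ((k:ℝ) + 1) := by ring
  linarith [hfinal, e1.le, e1.ge]

/-- Power-sum lower bound. -/
theorem power_sum_lower (k : ℕ) (hk : 2 ≤ k) (c : ℝ) (hc0 : 0 ≤ c) (hc : c ≤ 1 / 2)
    (x : ℝ) (hx : -c ≤ x) :
    (x + c) ^ (k + 1) / (k + 1) + (x + c) ^ k / 2 ≤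
      ∑ ℓ ∈ Finset.range (⌊x⌋.toNat + 1), (x - ℓ + c) ^ k := by
  have main : ∀ n : ℕ, ∀ x : ℝ, -c ≤ x → ⌊x⌋.toNat = n →
      (x + c) ^ (k + 1) / (k + 1) + (x + c) ^ k / 2 ≤
        ∑ ℓ ∈ Finset.range (⌊x⌋.toNat + 1), (x - ℓ + c) ^ k := by
    intro n
    induction n with
    | zero =>
      intro x hx hN
      rw [hN]
      simp only [zero_add, Finset.range_one, Finset.sum_singleton, Nat.cast_zero, sub_zero]
      have hfl : ⌊x⌋ ≤ 0 := by omega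
      have hx1 : x < 1 := by
        have := Int.lt_floor_add_one x
        have : (⌊x⌋ : ℝ) ≤ 0 := by exact_mod_cast hfl
        nlinarith [Int.lt_floor_add_one x]
      have hy0 : 0 ≤ x + c := by linarith
      have hy32 : x + c ≤ 3 / 2 := by linarith
      have hk3 : (3:ℝ) ≤ k + 1 := by
        have : (2:ℝ) ≤ k := by exact_mod_cast hk
        linarith
      have : (x + c) ^ (k + 1) / (k + 1) ≤ (x + c) ^ k / 2 := by
        rw [pow_succ]
        rw [div_le_div_iff₀ (by positivity) (by norm_num)]
        have h1 : (x + c) ^ k * (x + c) * 2 ≤ (x + c) ^ k * 3 := by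
          have := pow_nonneg hy0 k
          nlinarith
        nlinarith [pow_nonneg hy0 k]
      linarith
    | succ n ih =>
      intro x hx hN
      have hfl : ⌊x⌋ = (n : ℤ) + 1 := by omega
      have hx1 : (1:ℝ) ≤ x := by
        have : (1:ℤ) ≤ ⌊x⌋ := by omega
        exact_mod_cast (Int.le_floor.mp this)
      have hx1c : -c ≤ x - 1 := by linarith
      have hfl' : ⌊x - 1⌋ = (n : ℤ) := by
        have : x - 1 = x - (1 : ℤ) := by push_cast; ring
        rw [this, Int.floor_sub_intCast, hfl]; ring
      have hN' : ⌊x - 1⌋.toNat = n := by rw [hfl']; simp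
      have ihx := ih (x - 1) hx1c hN'
      rw [hN'] at ihx
      rw [hN]
      rw [Finset.sum_range_succ']
      have hsum_eq : ∑ i ∈ Finset.range (n + 1), (x - ↑(i + 1) + c) ^ k
          = ∑ i ∈ Finset.range (n + 1), (x - 1 - ↑i + c) ^ k := by
        apply Finset.sum_congr rfl
        intro i _
        push_cast
        ring_nf
      rw [hsum_eq]
      have hstep := step_lemma k (x + c) (by linarith)
      have heq : x + c - 1 = x - 1 + c := by ring
      rw [heq] at hstep
      simp only [Nat.cast_zero, sub_zero]
      linarith
  exact main ⌊x⌋.toNat x hx rfl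
end

section
/- Sharper power-sum upper bound: For every integer k ≥ 1, every real c with 0 ≤ c ≤ 1/2, and every real x ≥ −c, one has ∑_{ℓ=0}^{N} (x − ℓ + c)^k ≤ (x+c)^{k+1}/(k+1) + (x+c)^k/2 + k·(x+c)^{k−1}/8, where N = ⌊x⌋ if x ≥ 0 and N = 0 if x < 0 (i.e. N is the truncation Int.toNat ⌊x⌋). -/
open Finset in
lemma coeff_ineq (K i : ℕ) (hi : i < K) :
    4 * (K+2) * Nat.choose (K+1) i ≤ 8 * Nat.choose (K+2) i + (K+1)*(K+2)*Nat.choose K i := by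
  have h1 := Nat.choose_mul_succ_eq (K+1) i
  have h2 := Nat.choose_mul_succ_eq K i
  have hD1 : K + 1 + 1 - i = (K - i) + 2 := by omega
  have hD2 : K + 1 - i = (K - i) + 1 := by omega
  rw [hD1] at h1
  rw [hD2] at h2
  set D := K - i with hD
  set A := Nat.choose (K+1) i with hA
  refine Nat.le_of_mul_le_mul_right ?_ (show 0 < D + 2 by omega)
  have e1 : 8 * Nat.choose (K+2) i * (D+2) = 8 * (A * (K+2)) := by
    have : Nat.choose (K+2) i * (D+2) = A * (K+2) := h1.symm
    calc 8 * Nat.choose (K+2) i * (D+2) = 8 * (Nat.choose (K+2) i * (D+2)) := by ring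
      _ = 8 * (A * (K+2)) := by rw [this]
  have e2 : (K+1)*(K+2)*Nat.choose K i * (D+2) = (K+2) * (A * (D+1)) * (D+2) := by
    calc (K+1)*(K+2)*Nat.choose K i * (D+2) = (K+2) * (Nat.choose K i * (K+1)) * (D+2) := by ring
      _ = (K+2) * (A * (D+1)) * (D+2) := by rw [h2]
  have inner : 4 * A * (D+2) ≤ 8 * A + A * (D+1) * (D+2) := by
    have hDD : D ≤ D*D + 2 := by nlinarith
    nlinarith [Nat.mul_le_mul_left A hDD]
  have key : 4 * (K+2) * A * (D+2) ≤ 8 * (A*(K+2)) + (K+2) * (A*(D+1)) * (D+2) := by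
    have := Nat.mul_le_mul_left (K+2) inner
    calc 4 * (K+2) * A * (D+2) = (K+2) * (4 * A * (D+2)) := by ring
      _ ≤ (K+2) * (8 * A + A * (D+1) * (D+2)) := this
      _ = 8 * (A*(K+2)) + (K+2) * (A*(D+1)) * (D+2) := by ring
  calc 4 * (K+2) * A * (D+2) ≤ 8 * (A*(K+2)) + (K+2) * (A*(D+1)) * (D+2) := key
    _ = 8 * Nat.choose (K+2) i * (D+2) + (K+1)*(K+2)*Nat.choose K i * (D+2) := by
        rw [e1, e2]
    _ = (8 * Nat.choose (K+2) i + (K+1)*(K+2)*Nat.choose K i) * (D+2) := by ring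

open Finset in
lemma expand_pow (a : ℝ) (n : ℕ) :
    (a+1)^n = ∑ i ∈ range (n+1), a^i * (n.choose i : ℝ) := by
  rw [add_pow]; simp

open Finset in
lemma step_key (K : ℕ) (a : ℝ) (ha : 0 ≤ a) :
    8*(K+2:ℝ)*(a+1)^(K+1) + 8*a^(K+2) + 4*(K+2)*a^(K+1) + (K+1)*(K+2)*a^K
      ≤ 8*(a+1)^(K+2) + 4*((K:ℝ)+2)*(a+1)^(K+1) + ((K:ℝ)+1)*((K:ℝ)+2)*(a+1)^K := by
  have e2 : (a+1)^(K+2) = ∑ i ∈ range K, a^i * ((K+2).choose i : ℝ)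
      + a^K * ((K+2).choose K : ℝ) + a^(K+1) * ((K:ℝ)+2) + a^(K+2) := by
    rw [expand_pow, sum_range_succ, sum_range_succ, sum_range_succ, Nat.choose_self,
      show (K+2).choose (K+1) = K+2 from Nat.choose_succ_self_right (K+1)]
    push_cast; ring
  have e1 : (a+1)^(K+1) = ∑ i ∈ range K, a^i * ((K+1).choose i : ℝ)
      + a^K * ((K:ℝ)+1) + a^(K+1) := by
    rw [expand_pow, sum_range_succ, sum_range_succ, Nat.choose_self,
      show (K+1).choose K = K+1 from Nat.choose_succ_self_right K]
    push_cast; ring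
  have e0 : (a+1)^K = ∑ i ∈ range K, a^i * (K.choose i : ℝ) + a^K := by
    rw [expand_pow, sum_range_succ, Nat.choose_self]
    push_cast; ring
  have hCKn : 2 * ((K+2).choose K) = (K+1)*(K+2) := by
    have h := Nat.choose_mul_succ_eq (K+1) K
    rw [Nat.choose_succ_self_right, show K+1+1-K = 2 by omega,
      show K+1+1 = K+2 from rfl] at h
    omega
  have hCKa : 8*(((K+2).choose K : ℝ))*a^K = 4*((K:ℝ)+1)*((K:ℝ)+2)*a^K := by
    have h : (2 * ((K+2).choose K) : ℝ) = ((K:ℝ)+1)*((K:ℝ)+2) := by exact_mod_cast hCKn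
    linear_combination 4*a^K * h
  have hterm : 8*((K:ℝ)+2) * ∑ i ∈ range K, a^i * ((K+1).choose i : ℝ)
      ≤ 8 * ∑ i ∈ range K, a^i * ((K+2).choose i : ℝ)
        + 4*((K:ℝ)+2) * ∑ i ∈ range K, a^i * ((K+1).choose i : ℝ)
        + ((K:ℝ)+1)*((K:ℝ)+2) * ∑ i ∈ range K, a^i * (K.choose i : ℝ) := by
    rw [mul_sum, mul_sum, mul_sum, mul_sum, ← sum_add_distrib, ← sum_add_distrib]
    refine sum_le_sum fun i hi => ?_
    have hc := coeff_ineq K i (mem_range.mp hi)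
    have hc' : (4 * (K+2) * Nat.choose (K+1) i : ℝ)
        ≤ (8 * Nat.choose (K+2) i + (K+1)*(K+2)*Nat.choose K i : ℝ) := by exact_mod_cast hc
    have hai : (0:ℝ) ≤ a^i := pow_nonneg ha i
    have := mul_le_mul_of_nonneg_left hc' hai
    push_cast at this ⊢
    nlinarith [this]
  rw [e2, e1, e0]
  ring_nf
  ring_nf at hterm hCKa
  linarith [hterm, hCKa]

open Finset in
lemma step_div (K : ℕ) (a : ℝ) (ha : 0 ≤ a) :
    (a+1)^(K+1) + (a^(K+2)/((K:ℝ)+2) + a^(K+1)/2 + ((K:ℝ)+1)*a^K/8)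
      ≤ (a+1)^(K+2)/((K:ℝ)+2) + (a+1)^(K+1)/2 + ((K:ℝ)+1)*(a+1)^K/8 := by
  have hK : ((K:ℝ)+2) ≠ 0 := by positivity
  have h8 : (0:ℝ) < 8*((K:ℝ)+2) := by positivity
  have key := step_key K a ha
  rw [← mul_le_mul_iff_right₀ h8]
  have eL : 8*((K:ℝ)+2) * ((a+1)^(K+1) + (a^(K+2)/((K:ℝ)+2) + a^(K+1)/2 + ((K:ℝ)+1)*a^K/8))
      = 8*(K+2:ℝ)*(a+1)^(K+1) + 8*a^(K+2) + 4*(K+2)*a^(K+1) + (K+1)*(K+2)*a^K := by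
    field_simp; ring
  have eR : 8*((K:ℝ)+2) * ((a+1)^(K+2)/((K:ℝ)+2) + (a+1)^(K+1)/2 + ((K:ℝ)+1)*(a+1)^K/8)
      = 8*(a+1)^(K+2) + 4*((K:ℝ)+2)*(a+1)^(K+1) + ((K:ℝ)+1)*((K:ℝ)+2)*(a+1)^K := by
    field_simp; ring
  rw [eL, eR]; exact key

open Finset in
lemma base_ineq (K : ℕ) (y : ℝ) (hy : 0 ≤ y) :
    y^(K+1) ≤ y^(K+2)/((K:ℝ)+2) + y^(K+1)/2 + ((K:ℝ)+1)*y^K/8 := by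
  have hK : ((K:ℝ)+2) ≠ 0 := by positivity
  have h8 : (0:ℝ) < 8*((K:ℝ)+2) := by positivity
  rw [← mul_le_mul_iff_right₀ h8]
  have eR : 8*((K:ℝ)+2) * (y^(K+2)/((K:ℝ)+2) + y^(K+1)/2 + ((K:ℝ)+1)*y^K/8)
      = 8*y^(K+2) + 4*((K:ℝ)+2)*y^(K+1) + ((K:ℝ)+1)*((K:ℝ)+2)*y^K := by
    field_simp; ring
  rw [eR, pow_succ, pow_succ, pow_succ]
  have hyK : (0:ℝ) ≤ y^K := pow_nonneg hy K
  have hKn : (0:ℝ) ≤ (K:ℝ) := Nat.cast_nonneg K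
  nlinarith [mul_nonneg hyK (sq_nonneg (4*y - ((K:ℝ)+2))),
    mul_nonneg (mul_nonneg hyK hKn) (show (0:ℝ) ≤ (K:ℝ)+2 by positivity)]

open Finset in
lemma main_aux (K : ℕ) (c : ℝ) (hc0 : 0 ≤ c) :
    ∀ n : ℕ, ∀ x : ℝ, -c ≤ x → ⌊x⌋.toNat = n →
    ∑ ℓ ∈ Finset.range (n + 1), (x - ℓ + c) ^ (K+1) ≤
      (x + c)^(K+2)/((K:ℝ)+2) + (x + c)^(K+1)/2 + ((K:ℝ)+1)*(x+c)^K/8 := by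
  intro n
  induction n with
  | zero =>
    intro x hx h0
    rw [zero_add, Finset.sum_range_one, Nat.cast_zero, sub_zero]
    exact base_ineq K (x+c) (by linarith)
  | succ n ih =>
    intro x hx hn
    have hfl : ⌊x⌋ = (n:ℤ) + 1 := by omega
    have hx1 : (1:ℝ) ≤ x := by
      have h1 : ((n:ℝ) + 1) ≤ (⌊x⌋ : ℝ) := by exact_mod_cast hfl.ge
      have h2 := Int.floor_le x
      have h3 : (0:ℝ) ≤ (n:ℝ) := Nat.cast_nonneg n
      linarith
    have hfl' : ⌊x - 1⌋.toNat = n := by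
      have h : ⌊x - (1:ℝ)⌋ = ⌊x⌋ - 1 := by
        have := Int.floor_sub_intCast x 1
        simpa using this
      omega
    have ihx := ih (x-1) (by linarith) hfl'
    rw [Finset.sum_range_succ']
    have e : ∑ i ∈ range (n+1), (x - ((i:ℕ)+1 : ℕ) + c)^(K+1)
        = ∑ i ∈ range (n+1), ((x-1) - i + c)^(K+1) := by
      refine Finset.sum_congr rfl fun i _ => ?_
      push_cast; ring_nf
    rw [e]
    have ha : (0:ℝ) ≤ x - 1 + c := by linarith
    have hs := step_div K (x-1+c) ha
    rw [show x-1+c+1 = x+c by ring] at hs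
    simp only [Nat.cast_zero, sub_zero]
    linarith [ihx, hs]


/-- Sharper power-sum upper bound. -/
theorem power_sum_upper_sharp (k : ℕ) (hk : 1 ≤ k) (c : ℝ) (hc0 : 0 ≤ c) (hc : c ≤ 1 / 2)
    (x : ℝ) (hx : -c ≤ x) :
    ∑ ℓ ∈ Finset.range (⌊x⌋.toNat + 1), (x - ℓ + c) ^ k ≤
      (x + c) ^ (k + 1) / (k + 1) + (x + c) ^ k / 2 + k * (x + c) ^ (k - 1) / 8 := by
  obtain ⟨K, rfl⟩ : ∃ K, k = K + 1 := ⟨k - 1, by omega⟩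
  have h := main_aux K c hc0 (⌊x⌋.toNat) x hx rfl
  simp only [Nat.add_sub_cancel] at *
  push_cast at h ⊢
  have hden : ((K:ℝ)+1+1) = (K:ℝ)+2 := by ring
  rw [hden]
  exact h
end

section
/- Bound on the Blom–Fröberg number under gcd reduction: Let a_1, a_2, … be positive integers, let k ≥ 1, let d = gcd(a_1,…,a_k), and define c_i = a_i/d for 1 ≤ i ≤ k and c_i = a_i for i > k. Then for every r ∈ ℕ, every m ∈ ℤ and every ℓ ∈ ℕ, one has [m ℓ]^a_r ≤ d^ℓ · [m ℓ]^c_r, as an inequality of rational numbers. -/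
lemma bfAux_neg (a : ℕ → ℕ) (r : ℕ) : ∀ m : ℕ, ∀ l : ℤ, l < 0 → bfAux a r m l = 0 := by
  intro m
  induction m with
  | zero => intro l hl; simp [bfAux]; omega
  | succ n ih =>
      intro l hl
      simp only [bfAux]
      rw [if_pos (Or.inl hl)]

lemma bfAux_nonneg (a : ℕ → ℕ) (r : ℕ) : ∀ m : ℕ, ∀ l : ℤ, 0 ≤ bfAux a r m l := by
  intro m
  induction m with
  | zero => intro l; simp only [bfAux]; split <;> norm_num
  | succ n ih =>
      intro l
      simp only [bfAux]
      split
      · exact le_rfl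
      · have h1 := ih l
        have h2 := ih (l - 1)
        have h3 : (0 : ℚ) ≤ (a (n + 1 + r) : ℚ) / 2 := by positivity
        nlinarith

lemma bfAux_le (a c : ℕ → ℕ) (d : ℕ) (hd : 1 ≤ d)
    (hac : ∀ i, 1 ≤ i → (a i : ℚ) ≤ d * c i) (r : ℕ) :
    ∀ m : ℕ, ∀ ℓ : ℕ, bfAux a r m (ℓ : ℤ) ≤ (d : ℚ) ^ ℓ * bfAux c r m (ℓ : ℤ) := by
  have hd' : (1 : ℚ) ≤ d := by exact_mod_cast hd
  intro m
  induction m with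
  | zero =>
      intro ℓ
      simp only [bfAux]
      split
      · next h =>
          have : ℓ = 0 := by exact_mod_cast h
          subst this; simp
      · simp
  | succ n ih =>
      intro ℓ
      simp only [bfAux]
      split
      · next h => positivity
      · have hcnn1 := bfAux_nonneg c r n (ℓ : ℤ)
        have hann := bfAux_nonneg a r n ((ℓ : ℤ) - 1)
        have hai : (a (n + 1 + r) : ℚ) ≤ d * c (n + 1 + r) := hac _ (by omega)
        cases ℓ with
        | zero =>
            have hz : bfAux a r n ((0 : ℤ) - 1) = 0 := bfAux_neg a r n _ (by norm_num)
            have hz' : bfAux c r n ((0 : ℤ) - 1) = 0 := bfAux_neg c r n _ (by norm_num)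
            push_cast at hz hz' ⊢
            rw [hz, hz']
            have := ih 0
            push_cast at this
            simpa using this
        | succ p =>
            have h1 := ih (p + 1)
            have h2 := ih p
            have hcnn2 := bfAux_nonneg c r n (p : ℤ)
            have hann2 := bfAux_nonneg a r n (p : ℤ)
            have he : ((p : ℤ) + 1) - 1 = (p : ℤ) := by ring
            push_cast at h1 h2 ⊢
            rw [he]
            have hdp : (0 : ℚ) ≤ (d : ℚ) ^ p := by positivity
            have hstep : (a (n + 1 + r) : ℚ) / 2 * bfAux a r n (p : ℤ) ≤
                (d : ℚ) ^ (p + 1) * ((c (n + 1 + r) : ℚ) / 2 * bfAux c r n (p : ℤ)) := by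
              have h3 : (a (n + 1 + r) : ℚ) / 2 * bfAux a r n (p : ℤ) ≤
                  (d : ℚ) * (c (n + 1 + r) : ℚ) / 2 * bfAux a r n (p : ℤ) := by
                apply mul_le_mul_of_nonneg_right _ hann2
                linarith
              have h4 : (d : ℚ) * (c (n + 1 + r) : ℚ) / 2 * bfAux a r n (p : ℤ) ≤
                  (d : ℚ) * (c (n + 1 + r) : ℚ) / 2 * ((d : ℚ) ^ p * bfAux c r n (p : ℤ)) := by
                apply mul_le_mul_of_nonneg_left h2
                positivity
              calc _ ≤ _ := h3
                _ ≤ _ := h4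
                _ = (d : ℚ) ^ (p + 1) * ((c (n + 1 + r) : ℚ) / 2 * bfAux c r n (p : ℤ)) := by
                    ring
            have hmono : (d : ℚ) ^ (p + 1) ≥ 0 := by positivity
            calc bfAux a r n ((p : ℤ) + 1) + (a (n + 1 + r) : ℚ) / 2 * bfAux a r n (p : ℤ)
                ≤ (d : ℚ) ^ (p + 1) * bfAux c r n ((p : ℤ) + 1) +
                  (d : ℚ) ^ (p + 1) * ((c (n + 1 + r) : ℚ) / 2 * bfAux c r n (p : ℤ)) := by
                  exact add_le_add h1 hstep
              _ = (d : ℚ) ^ (p + 1) *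
                  (bfAux c r n ((p : ℤ) + 1) + (c (n + 1 + r) : ℚ) / 2 * bfAux c r n (p : ℤ)) := by
                  ring

/-- Bound on the Blom–Fröberg number under gcd reduction. -/
theorem bf_gcd_bound (a : ℕ → ℕ) (ha : ∀ i, 1 ≤ a i) (k : ℕ) (hk : 1 ≤ k)
    (c : ℕ → ℕ) (hc₁ : ∀ i, 1 ≤ i → i ≤ k → c i = a i / gcdUpTo a k)
    (hc₂ : ∀ i, k < i → c i = a i)
    (r : ℕ) (m : ℤ) (ℓ : ℕ) :
    bf a r m (ℓ : ℤ) ≤ (gcdUpTo a k : ℚ) ^ ℓ * bf c r m (ℓ : ℤ) := by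
  set d := gcdUpTo a k with hdset
  have hdvd : ∀ i, 1 ≤ i → i ≤ k → d ∣ a i := fun i h1 h2 =>
    Finset.gcd_dvd (Finset.mem_Icc.mpr ⟨h1, h2⟩)
  have hd : 1 ≤ d := by
    have := hdvd 1 le_rfl hk
    have h1 := ha 1
    exact Nat.pos_of_dvd_of_pos this h1
  have hac : ∀ i, 1 ≤ i → (a i : ℚ) ≤ d * c i := by
    intro i hi
    by_cases h : i ≤ k
    · rw [hc₁ i hi h]
      have he : d * (a i / d) = a i := Nat.mul_div_cancel' (hdvd i hi h)
      exact_mod_cast he.ge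
    · rw [hc₂ i (by omega)]
      have : a i ≤ d * a i := Nat.le_mul_of_pos_left _ hd
      exact_mod_cast this
  unfold bf
  split
  · simp
  · exact bfAux_le a c d hd hac r m.toNat ℓ
end
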